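/- For complex a with a ≠ 0 and |a| < 1/2 and |t| sufficiently small, the generating function Σ_{n≥0} D_{2n}(a) t^n equals 2 / (2 − a(1 − √(1 − 4t))). -/

import Mathlib

/-- The adsorbing Dyck path partition function `D_{2n}(a)` for complex `a`. -/
noncomputable def dyckPFC (n : ℕ) (a : ℂ) : ℂ :=
  ∑ ℓ ∈ Finset.range (n + 1),
    ((2 * ℓ + 1 : ℂ) / (n + ℓ + 1)) * (Nat.choose (2 * n) (n + ℓ) : ℂ) * (a - 1) ^ ℓ

/-!
With `b = a - 1`, the summand of `D_{2n}(a)` is `B(n, ℓ) b^ℓ` for the ballot number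
`B(n, ℓ) = binom(2n, n+ℓ) - binom(2n, n+ℓ+1)`. Pascal's rule and the convolution
`∑ₘ Cₘ B(n-m, ℓ) = B(n, ℓ) + B(n, ℓ+1)` turn this into the first-return decomposition
`D_{2n+2}(a) = a ∑ₘ Cₘ D_{2(n-m)}(a)` (with Catalan numbers `Cₘ`). For `C(t) = ∑ Cₙ tⁿ` this gives
`F = 1 + a t C(t) F` and `C = 1 + t C²`; for small `t` the number `1 - 2 t C(t)` has positive real
part and squares to `1 - 4t`, so it is the principal square root, whence
`F = 2 / (2 - a(1 - √(1-4t)))`.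
-/

open Finset

def ballot (n ℓ : ℕ) : ℤ := (2 * n).choose (n + ℓ) - (2 * n).choose (n + ℓ + 1)

lemma ballot_eq_zero_of_lt {n ℓ : ℕ} (h : n < ℓ) : ballot n ℓ = 0 := by
  simp [ballot, Nat.choose_eq_zero_of_lt (by omega : 2 * n < n + ℓ),
    Nat.choose_eq_zero_of_lt (by omega : 2 * n < n + ℓ + 1)]

lemma ballot_mul_add_add_one {n ℓ : ℕ} (h : ℓ ≤ n) :
    ballot n ℓ * (n + ℓ + 1) = (2 * ℓ + 1) * (2 * n).choose (n + ℓ) := by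
  have key := Nat.choose_succ_right_eq (2 * n) (n + ℓ)
  rw [show 2 * n - (n + ℓ) = n - ℓ by omega] at key
  have key' : ((2 * n).choose (n + ℓ + 1) : ℤ) * (n + ℓ + 1)
      = (2 * n).choose (n + ℓ) * (n - ℓ) := by
    exact_mod_cast key
  rw [ballot]
  linear_combination -key'

lemma ballot_zero_right (n : ℕ) : ballot n 0 = catalan n := by
  have h := ballot_mul_add_add_one (Nat.zero_le n)
  have hc : ((n + 1 : ℕ) : ℤ) * catalan n = (2 * n).choose n := by
    exact_mod_cast succ_mul_catalan_eq_centralBinom n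
  push_cast at h hc
  refine mul_right_cancel₀ (b := (n + 1 : ℤ)) (by positivity) ?_
  linear_combination h - hc

lemma Nat.choose_add_two_add_two (m k : ℕ) :
    (m + 2).choose (k + 2) = m.choose k + 2 * m.choose (k + 1) + m.choose (k + 2) := by
  simp only [Nat.choose_succ_succ]
  ring

lemma ballot_succ_succ (n ℓ : ℕ) :
    ballot (n + 1) (ℓ + 1) = ballot n ℓ + 2 * ballot n (ℓ + 1) + ballot n (ℓ + 2) := by
  simp only [ballot, show 2 * (n + 1) = 2 * n + 2 by ring,
    show n + 1 + (ℓ + 1) = n + ℓ + 2 by ring, show n + ℓ + 2 + 1 = n + ℓ + 1 + 2 by ring,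
    Nat.choose_add_two_add_two]
  push_cast
  ring_nf

lemma ballot_succ_zero (n : ℕ) : ballot (n + 1) 0 = ballot n 0 + ballot n 1 := by
  have h₁ : (2 * n + 2).choose (n + 1) = 2 * ((2 * n).choose n + (2 * n).choose (n + 1)) := by
    rw [Nat.choose_succ_succ, ← Nat.choose_symm_half, Nat.choose_succ_succ]
    ring
  have h₂ := Nat.choose_add_two_add_two (2 * n) n
  simp only [ballot, show 2 * (n + 1) = 2 * n + 2 by ring, add_zero, h₁,
    show n + 1 + 1 = n + 2 by ring, h₂]
  push_cast
  ring

lemma sum_catalan_mul_ballot (n ℓ : ℕ) :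
    ∑ m ∈ range (n + 1), (catalan m : ℤ) * ballot (n - m) ℓ = ballot n ℓ + ballot n (ℓ + 1) := by
  induction n generalizing ℓ with
  | zero => simp [ballot_eq_zero_of_lt]
  | succ n ih =>
    have hsplit : ∑ m ∈ range (n + 2), (catalan m : ℤ) * ballot (n + 1 - m) ℓ
        = ∑ m ∈ range (n + 1), (catalan m : ℤ) * ballot (n - m + 1) ℓ
          + catalan (n + 1) * ballot 0 ℓ := by
      rw [sum_range_succ, Nat.sub_self]
      congr 1
      refine sum_congr rfl fun m hm => ?_
      rw [Nat.sub_add_comm (by simpa [Nat.lt_succ_iff] using hm)]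
    rw [hsplit]
    cases ℓ with
    | zero =>
      have h₀ : ballot 0 0 = 1 := rfl
      have h₁ : ballot (n + 1) 1 = ballot n 0 + 2 * ballot n 1 + ballot n 2 := ballot_succ_succ n 0
      simp only [ballot_succ_zero, mul_add, sum_add_distrib, ih, h₀, mul_one, zero_add,
        one_add_one_eq_two]
      linear_combination ballot_succ_zero n - h₁ - ballot_zero_right (n + 1)
    | succ ℓ =>
      simp only [ballot_succ_succ, mul_add, sum_add_distrib, ← mul_sum, mul_left_comm _ (2 : ℤ),
        ih, ballot_eq_zero_of_lt (Nat.succ_pos ℓ), mul_zero]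
      ring

section BallotSum

variable {R : Type*} [CommRing R]

def ballotSum (n k : ℕ) (b : R) : R :=
  ∑ ℓ ∈ range (n + 1), (ballot n (ℓ + k) : R) * b ^ ℓ

lemma ballotSum_eq_sum_range {n N : ℕ} (h : n < N) (k : ℕ) (b : R) :
    ballotSum n k b = ∑ ℓ ∈ range N, (ballot n (ℓ + k) : R) * b ^ ℓ := by
  refine sum_subset (range_subset_range.mpr h) fun ℓ _ hℓ => ?_
  rw [ballot_eq_zero_of_lt (by simp at hℓ; omega), Int.cast_zero, zero_mul]

lemma mul_ballotSum_succ (n k : ℕ) (b : R) :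
    b * ballotSum n (k + 1) b = ballotSum n k b - ballot n k := by
  rw [ballotSum, ballotSum, mul_sum, sum_range_succ,
    sum_range_succ' (fun ℓ => (ballot n (ℓ + k) : R) * b ^ ℓ),
    ballot_eq_zero_of_lt (by omega : n < n + (k + 1))]
  simp only [Int.cast_zero, zero_mul, mul_zero, add_zero, pow_zero, mul_one, zero_add,
    add_sub_cancel_right, pow_succ]
  refine sum_congr rfl fun ℓ _ => ?_
  rw [add_right_comm, add_assoc]
  ring

lemma ballotSum_succ_zero (n : ℕ) (b : R) :
    ballotSum (n + 1) 0 b = ballot n 0 + ballot n 1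
      + b * (ballotSum n 0 b + 2 * ballotSum n 1 b + ballotSum n 2 b) := by
  rw [ballotSum, sum_range_succ' (fun ℓ => (ballot (n + 1) (ℓ + 0) : R) * b ^ ℓ), add_zero,
    ballot_succ_zero, ballotSum, ballotSum, ballotSum]
  simp only [add_zero, ballot_succ_succ, mul_sum, ← sum_add_distrib]
  push_cast
  rw [pow_zero, mul_one, add_comm]
  congr 1
  refine sum_congr rfl fun ℓ _ => ?_
  ring

lemma sum_catalan_mul_ballotSum (n : ℕ) (b : R) :
    ∑ m ∈ range (n + 1), (catalan m : R) * ballotSum (n - m) 0 b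
      = ballotSum n 0 b + ballotSum n 1 b := by
  have hext : ∀ m ∈ range (n + 1), (catalan m : R) * ballotSum (n - m) 0 b
      = ∑ ℓ ∈ range (n + 1), (catalan m : R) * ((ballot (n - m) ℓ : R) * b ^ ℓ) := by
    intro m hm
    rw [ballotSum_eq_sum_range (N := n + 1) (by simp at hm; omega), mul_sum]
    simp only [add_zero]
  rw [sum_congr rfl hext, sum_comm, ballotSum, ballotSum, ← sum_add_distrib]
  refine sum_congr rfl fun ℓ _ => ?_
  have h := congrArg (Int.cast : ℤ → R) (sum_catalan_mul_ballot n ℓ)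
  push_cast at h
  simp only [add_zero, ← mul_assoc, ← sum_mul, h]
  ring

lemma ballotSum_succ_zero_eq_mul_sum_catalan (n : ℕ) (b : R) :
    ballotSum (n + 1) 0 b
      = (b + 1) * ∑ m ∈ range (n + 1), (catalan m : R) * ballotSum (n - m) 0 b := by
  rw [sum_catalan_mul_ballotSum, ballotSum_succ_zero]
  linear_combination mul_ballotSum_succ n 0 b + mul_ballotSum_succ n 1 b

end BallotSum

lemma dyckPFC_eq_ballotSum (n : ℕ) (a : ℂ) : dyckPFC n a = ballotSum n 0 (a - 1) := by
  refine sum_congr rfl fun ℓ hℓ => ?_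
  have h := congrArg (Int.cast : ℤ → ℂ)
    (ballot_mul_add_add_one (by simpa [Nat.lt_succ_iff] using hℓ))
  push_cast at h
  rw [add_zero, div_mul_eq_mul_div, ← h,
    mul_div_cancel_right₀ _ (by exact_mod_cast (n + ℓ).succ_ne_zero)]

lemma dyckPFC_zero (a : ℂ) : dyckPFC 0 a = 1 := by
  simp [dyckPFC]

lemma dyckPFC_succ (n : ℕ) (a : ℂ) :
    dyckPFC (n + 1) a = a * ∑ m ∈ range (n + 1), (catalan m : ℂ) * dyckPFC (n - m) a := by
  simp only [dyckPFC_eq_ballotSum, ballotSum_succ_zero_eq_mul_sum_catalan, sub_add_cancel]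

lemma norm_dyckPFC_le (n : ℕ) (a : ℂ) : ‖dyckPFC n a‖ ≤ 2 * (8 * (1 + ‖a - 1‖)) ^ n := by
  set M := 1 + ‖a - 1‖
  have hterm : ∀ ℓ ∈ range (n + 1),
      ‖(2 * ℓ + 1 : ℂ) / (n + ℓ + 1) * ((2 * n).choose (n + ℓ) : ℂ) * (a - 1) ^ ℓ‖
        ≤ 2 * (4 * M) ^ n := by
    intro ℓ hℓ
    have hℓn : ℓ ≤ n := by simpa [Nat.lt_succ_iff] using hℓ
    have hfrac : ‖(2 * ℓ + 1 : ℂ) / (n + ℓ + 1)‖ ≤ 2 := by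
      rw [show (2 * ℓ + 1 : ℂ) / (n + ℓ + 1) = ((2 * ℓ + 1 : ℝ) / (n + ℓ + 1) : ℝ) by
          push_cast; rfl,
        Complex.norm_real, Real.norm_of_nonneg (by positivity), div_le_iff₀ (by positivity)]
      linarith [(Nat.cast_nonneg n : (0 : ℝ) ≤ n)]
    have hchoose : ‖((2 * n).choose (n + ℓ) : ℂ)‖ ≤ 4 ^ n := by
      rw [Complex.norm_natCast]
      exact_mod_cast (Nat.choose_le_two_pow _ _).trans_eq (by rw [pow_mul]; norm_num)
    have hpow : ‖(a - 1) ^ ℓ‖ ≤ M ^ n := by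
      rw [norm_pow]
      calc ‖a - 1‖ ^ ℓ ≤ M ^ ℓ := by gcongr; simp [M]
        _ ≤ M ^ n := pow_le_pow_right₀ (by simp [M]) hℓn
    rw [norm_mul, norm_mul, mul_pow, ← mul_assoc]
    gcongr
  calc ‖dyckPFC n a‖ ≤ ∑ ℓ ∈ range (n + 1), 2 * (4 * M) ^ n :=
        (norm_sum_le _ _).trans (sum_le_sum hterm)
    _ = (n + 1) * (2 * (4 * M) ^ n) := by simp
    _ ≤ 2 ^ n * (2 * (4 * M) ^ n) := by gcongr; exact_mod_cast Nat.lt_two_pow_self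
    _ = 2 * (2 * (4 * M)) ^ n := by rw [mul_pow 2]; ring
    _ = 2 * (8 * M) ^ n := by ring

lemma summable_norm_dyckPFC_mul_pow {a t : ℂ} (ht : ‖t‖ < (8 * (1 + ‖a - 1‖))⁻¹) :
    Summable fun n => ‖dyckPFC n a * t ^ n‖ := by
  set r := 8 * (1 + ‖a - 1‖) * ‖t‖
  have hr : r < 1 := by
    have hpos : (0 : ℝ) < 8 * (1 + ‖a - 1‖) := by positivity
    have h := mul_lt_mul_of_pos_left ht hpos
    rwa [mul_inv_cancel₀ hpos.ne'] at h
  refine .of_nonneg_of_le (fun _ => norm_nonneg _) (fun n => ?_)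
    ((summable_geometric_of_lt_one (by positivity) hr).mul_left 2)
  rw [norm_mul, norm_pow, mul_pow, ← mul_assoc]
  gcongr
  exact norm_dyckPFC_le n a

lemma hasSum_mul_pow_of_succ_eq_sum {R : Type*} [NormedCommRing R] [CompleteSpace R]
    {u v w : ℕ → R} {t : R} (hu : Summable fun n => ‖u n * t ^ n‖)
    (hv : Summable fun n => ‖v n * t ^ n‖)
    (h : ∀ n, w (n + 1) = ∑ k ∈ range (n + 1), u k * v (n - k)) :
    HasSum (fun n => w n * t ^ n) (w 0 + t * ((∑' n, u n * t ^ n) * ∑' n, v n * t ^ n)) := by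
  have hterm : ∀ n, t * ∑ k ∈ range (n + 1), u k * t ^ k * (v (n - k) * t ^ (n - k))
      = w (n + 1) * t ^ (n + 1) := by
    intro n
    rw [h, sum_mul, mul_sum]
    refine sum_congr rfl fun k hk => ?_
    rw [pow_succ', ← pow_mul_pow_sub t (by simpa [Nat.lt_succ_iff] using hk : k ≤ n)]
    ring
  have hsucc := (hasSum_sum_range_mul_of_summable_norm hu hv).mul_left t
  simp only [hterm] at hsucc
  simpa only [pow_zero, mul_one] using HasSum.zero_add (f := fun n => w n * t ^ n) hsucc

lemma Complex.eq_cpow_one_half_of_mul_self {w z : ℂ} (h : w * w = z) (hw : 0 < w.re) :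
    w = z ^ (1 / 2 : ℂ) := by
  rw [one_div]
  have hs : z ^ (2⁻¹ : ℂ) * z ^ (2⁻¹ : ℂ) = z := by
    rw [← sq, cpow_ofNat_inv_pow]
  have hre : 0 ≤ (z ^ (2⁻¹ : ℂ)).re := by
    rw [cpow_inv_two_re]
    exact Real.sqrt_nonneg _
  have hsum : w + z ^ (2⁻¹ : ℂ) ≠ 0 := fun h0 => by
    have := congrArg re h0
    simp only [add_re, zero_re] at this
    linarith
  have : (w - z ^ (2⁻¹ : ℂ)) * (w + z ^ (2⁻¹ : ℂ)) = 0 := by linear_combination h - hs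
  exact sub_eq_zero.mp ((mul_eq_zero.mp this).resolve_right hsum)

lemma catalan_le_four_pow (n : ℕ) : catalan n ≤ 4 ^ n :=
  (Nat.le_mul_of_pos_left _ n.succ_pos).trans
    ((succ_mul_catalan_eq_centralBinom n).trans_le (Nat.centralBinom_le_four_pow n))

section CatalanSeries

variable {t : ℂ}

lemma norm_catalan_mul_pow_le (n : ℕ) : ‖(catalan n : ℂ) * t ^ n‖ ≤ (4 * ‖t‖) ^ n := by
  rw [norm_mul, norm_pow, Complex.norm_natCast, mul_pow]
  gcongr
  exact_mod_cast catalan_le_four_pow n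

lemma summable_norm_catalan_mul_pow (ht : ‖t‖ < 1 / 4) :
    Summable fun n => ‖(catalan n : ℂ) * t ^ n‖ :=
  .of_nonneg_of_le (fun _ => norm_nonneg _) norm_catalan_mul_pow_le
    (summable_geometric_of_lt_one (by positivity) (by linarith))

lemma norm_tsum_catalan_mul_pow_le (ht : ‖t‖ < 1 / 4) :
    ‖∑' n, (catalan n : ℂ) * t ^ n‖ ≤ (1 - 4 * ‖t‖)⁻¹ := by
  rw [← tsum_geometric_of_lt_one (by positivity) (by linarith)]
  exact tsum_of_norm_bounded (summable_geometric_of_lt_one (by positivity) (by linarith)).hasSum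
    norm_catalan_mul_pow_le

lemma tsum_catalan_mul_pow_eq (ht : ‖t‖ < 1 / 4) :
    ∑' n, (catalan n : ℂ) * t ^ n
      = 1 + t * ((∑' n, (catalan n : ℂ) * t ^ n) * ∑' n, (catalan n : ℂ) * t ^ n) := by
  have hC := summable_norm_catalan_mul_pow ht
  refine (hasSum_mul_pow_of_succ_eq_sum hC hC fun n => ?_).tsum_eq.trans (by simp)
  rw [catalan_succ', Nat.cast_sum, Finset.Nat.sum_antidiagonal_eq_sum_range_succ_mk]
  push_cast
  rfl

lemma cpow_one_half_one_sub_four_mul (ht : ‖t‖ < 1 / 6) :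
    (1 - 4 * t) ^ (1 / 2 : ℂ) = 1 - 2 * t * ∑' n, (catalan n : ℂ) * t ^ n := by
  have ht₄ : ‖t‖ < 1 / 4 := by linarith
  have hquad := tsum_catalan_mul_pow_eq ht₄
  have hG := norm_tsum_catalan_mul_pow_le ht₄
  set G := ∑' n, (catalan n : ℂ) * t ^ n
  refine (Complex.eq_cpow_one_half_of_mul_self (by linear_combination -4 * t * hquad) ?_).symm
  have hnorm : ‖2 * t * G‖ < 1 := by
    rw [norm_mul, norm_mul, Complex.norm_ofNat]
    calc 2 * ‖t‖ * ‖G‖ ≤ 2 * ‖t‖ * (1 - 4 * ‖t‖)⁻¹ := by gcongr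
      _ < 1 := by rw [mul_inv_lt_iff₀ (by linarith)]; linarith
  have := Complex.re_le_norm (2 * t * G)
  simp only [Complex.sub_re, Complex.one_re]
  linarith

end CatalanSeries

lemma tsum_dyckPFC_mul_pow_eq {a t : ℂ} (hD : Summable fun n => ‖dyckPFC n a * t ^ n‖)
    (ht : ‖t‖ < 1 / 4) :
    ∑' n, dyckPFC n a * t ^ n
      = 1 + a * t * (∑' n, (catalan n : ℂ) * t ^ n) * ∑' n, dyckPFC n a * t ^ n := by
  have hC : Summable fun n => ‖a * catalan n * t ^ n‖ := by
    simpa only [mul_assoc, norm_mul] using (summable_norm_catalan_mul_pow ht).mul_left ‖a‖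
  refine (hasSum_mul_pow_of_succ_eq_sum hC hD fun n => ?_).tsum_eq.trans ?_
  · simp only [dyckPFC_succ, mul_sum, mul_assoc]
  · simp only [dyckPFC_zero, mul_assoc, tsum_mul_left]
    ring

theorem dyckPF_generating_function_general (a : ℂ) :
    ∃ ε > 0, ∀ t : ℂ, ‖t‖ < ε →
      HasSum (fun n : ℕ => dyckPFC n a * t ^ n)
        (2 / (2 - a * (1 - (1 - 4 * t) ^ ((1 : ℂ) / 2)))) := by
  refine ⟨(8 * (1 + ‖a - 1‖))⁻¹, by positivity, fun t ht => ?_⟩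
  have ht₆ : ‖t‖ < 1 / 6 := ht.trans_le (by
    rw [inv_le_comm₀ (by positivity) (by norm_num)]
    linarith [norm_nonneg (a - 1)])
  have hD := summable_norm_dyckPFC_mul_pow ht
  have hF := tsum_dyckPFC_mul_pow_eq hD (by linarith)
  rw [cpow_one_half_one_sub_four_mul ht₆]
  set G := ∑' n, (catalan n : ℂ) * t ^ n
  set F := ∑' n, dyckPFC n a * t ^ n
  have hne : 1 - a * t * G ≠ 0 := fun h => by
    have : F * (1 - a * t * G) = 1 := by linear_combination hF
    simp [h] at this
  have hval : 2 / (2 - a * (1 - (1 - 2 * t * G))) = F := by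
    rw [div_eq_iff (by contrapose! hne; linear_combination hne / 2)]
    linear_combination -2 * hF
  rw [hval]
  exact hD.of_norm.hasSum

theorem dyckPF_generating_function (a : ℂ) (ha : a ≠ 0) (haSmall : ‖a‖ < 1 / 2) :
    ∃ ε > 0, ∀ t : ℂ, ‖t‖ < ε →
      HasSum (fun n : ℕ => dyckPFC n a * t ^ n)
        (2 / (2 - a * (1 - (1 - 4 * t) ^ ((1 : ℂ) / 2)))) :=
  dyckPF_generating_function_general a
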